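/- Assume that for every k = 1,…,K either (a_{k0} > 1 and a_{k1} > 1) or (min(a_{k0}, a_{k1}) = 0 and max(a_{k0}, a_{k1}) = a_{k•} > 1). Then the LOOCV squared prediction error PE satisfies PE(0) ≤ PE(λ) for all λ ≥ 0 if and only if min(a_{k0}, a_{k1}) = 0 and a_{k•} > 1 for every k = 1,…,K, i.e. PE is minimized at λ = 0 if and only if there is complete separation in the data. -/

import Mathlib

/-!
At `λ = 0` a separated category (with `a_{k•} > 1`) predicts every held-out observation exactly,
so complete separation gives `PE(0) = 0 ≤ PE(λ)`. Conversely, the derivative of `PE` at `0` is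
`-(8/n) Σ_k a_{k0} a_{k1} / (a_{k•} - 1)³`, a sum of nonpositive terms; if `0` minimises `PE` on
`[0, ∞)` this one-sided derivative is nonnegative, so every term vanishes: `a_{k0} a_{k1} = 0`.
-/

/-- Leave-one-out cross-validated squared prediction error for a saturated model with `K`
categories, counts `a0 k` (nonevents) and `a1 k` (events), and ridge penalty `l`. -/
noncomputable def loocvPE (K : ℕ) (a0 a1 : Fin K → ℕ) (l : ℝ) : ℝ :=
  (1 / ∑ k : Fin K, ((a0 k : ℝ) + (a1 k : ℝ))) *
    ∑ k : Fin K,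
      ((a0 k : ℝ) *
          (((a1 k : ℝ) + 2 * l) / ((a0 k : ℝ) + (a1 k : ℝ) - 1 + 4 * l)) ^ 2 +
       (a1 k : ℝ) *
          (1 - ((a1 k : ℝ) - 1 + 2 * l) / ((a0 k : ℝ) + (a1 k : ℝ) - 1 + 4 * l)) ^ 2)

open Finset Set

noncomputable def loocvCellPE (a b l : ℝ) : ℝ :=
  a * ((b + 2 * l) / (a + b - 1 + 4 * l)) ^ 2 + b * (1 - (b - 1 + 2 * l) / (a + b - 1 + 4 * l)) ^ 2

theorem loocvPE_eq_mul_sum (K : ℕ) (a0 a1 : Fin K → ℕ) (l : ℝ) :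
    loocvPE K a0 a1 l =
      (1 / ∑ k, ((a0 k : ℝ) + a1 k)) * ∑ k, loocvCellPE (a0 k) (a1 k) l :=
  rfl

theorem loocvCellPE_nonneg {a b : ℝ} (ha : 0 ≤ a) (hb : 0 ≤ b) (l : ℝ) :
    0 ≤ loocvCellPE a b l := by
  unfold loocvCellPE; positivity

theorem loocvCellPE_zero_right_zero (a : ℝ) : loocvCellPE a 0 0 = 0 := by
  simp [loocvCellPE]

theorem loocvCellPE_zero_left_zero {b : ℝ} (hb : b ≠ 1) : loocvCellPE 0 b 0 = 0 := by
  have : b - 1 ≠ 0 := sub_ne_zero.2 hb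
  simp [loocvCellPE, this]

theorem hasDerivAt_loocvCellPE {a b : ℝ} (hc : a + b - 1 ≠ 0) :
    HasDerivAt (loocvCellPE a b) (-8 * (a * b / (a + b - 1) ^ 3)) 0 := by
  have hden : HasDerivAt (fun l : ℝ => a + b - 1 + 4 * l) 4 0 := by
    simpa using ((hasDerivAt_id (0 : ℝ)).const_mul 4).const_add (a + b - 1)
  have hnum : ∀ c : ℝ, HasDerivAt (fun l : ℝ => c + 2 * l) 2 0 := fun c => by
    simpa using ((hasDerivAt_id (0 : ℝ)).const_mul 2).const_add c
  have hden0 : a + b - 1 + 4 * (0 : ℝ) ≠ 0 := by simpa using hc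
  have hq0 := (hnum b).fun_div hden hden0
  have hq1 := (hnum (b - 1)).fun_div hden hden0
  refine (((hq0.fun_pow 2).const_mul a).fun_add
    (((hasDerivAt_const (0 : ℝ) (1 : ℝ)).fun_sub hq1).fun_pow 2 |>.const_mul b)).congr_deriv ?_
  norm_num
  field_simp
  ring

theorem IsMinOn.hasDerivWithinAt_Ici_nonneg {f : ℝ → ℝ} {a f' : ℝ} (h : IsMinOn f (Ici a) a)
    (hf : HasDerivWithinAt f f' (Ici a) a) : 0 ≤ f' := by
  have hcone : (1 : ℝ) ∈ posTangentConeAt (Ici a) a :=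
    mem_posTangentConeAt_of_segment_subset (by simp [segment_eq_Icc, Set.Icc_subset_Ici_self])
  simpa using h.localize.hasFDerivWithinAt_nonneg hf.hasFDerivWithinAt hcone

section loocvPE

variable {K : ℕ} {a0 a1 : Fin K → ℕ}

theorem loocvPE_nonneg (l : ℝ) : 0 ≤ loocvPE K a0 a1 l := by
  rw [loocvPE_eq_mul_sum]
  exact mul_nonneg (by positivity)
    (sum_nonneg fun k _ => loocvCellPE_nonneg (Nat.cast_nonneg _) (Nat.cast_nonneg _) l)

theorem loocvPE_zero_eq_zero (hsep : ∀ k, min (a0 k) (a1 k) = 0 ∧ 1 < a0 k + a1 k) :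
    loocvPE K a0 a1 0 = 0 := by
  rw [loocvPE_eq_mul_sum]
  refine mul_eq_zero_of_right _ (sum_eq_zero fun k _ => ?_)
  rcases Nat.min_eq_zero_iff.1 (hsep k).1 with h0 | h1
  · have hb : (a1 k : ℝ) ≠ 1 := by
      have := (hsep k).2
      exact_mod_cast (by omega : a1 k ≠ 1)
    rw [h0, Nat.cast_zero]
    exact loocvCellPE_zero_left_zero hb
  · rw [h1, Nat.cast_zero]
    exact loocvCellPE_zero_right_zero _

theorem hasDerivAt_loocvPE (hc : ∀ k, (a0 k : ℝ) + a1 k - 1 ≠ 0) :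
    HasDerivAt (loocvPE K a0 a1)
      ((1 / ∑ k, ((a0 k : ℝ) + a1 k)) *
        ∑ k, -8 * ((a0 k : ℝ) * a1 k / ((a0 k : ℝ) + a1 k - 1) ^ 3)) 0 :=
  (HasDerivAt.fun_sum fun k _ => hasDerivAt_loocvCellPE (hc k)).const_mul _

theorem mul_eq_zero_of_isMinOn_loocvPE (hk : ∀ k, 2 ≤ a0 k + a1 k)
    (hn : 0 < ∑ k, (a0 k + a1 k)) (hmin : IsMinOn (loocvPE K a0 a1) (Ici 0) 0) (k : Fin K) :
    a0 k * a1 k = 0 := by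
  have hc : ∀ k, (1 : ℝ) ≤ a0 k + a1 k - 1 := fun k => by
    have : (2 : ℝ) ≤ a0 k + a1 k := by exact_mod_cast hk k
    linarith
  set r : Fin K → ℝ := fun k => (a0 k : ℝ) * a1 k / ((a0 k : ℝ) + a1 k - 1) ^ 3
  have hr : ∀ k, 0 ≤ r k := fun k => by have := hc k; positivity
  have hN : 0 < 1 / ∑ k, ((a0 k : ℝ) + a1 k) := by
    have : (0 : ℝ) < ((∑ k, (a0 k + a1 k) : ℕ) : ℝ) := by exact_mod_cast hn
    push_cast at this
    positivity
  have hderiv := hmin.hasDerivWithinAt_Ici_nonneg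
    (hasDerivAt_loocvPE fun k => by linarith [hc k]).hasDerivWithinAt
  rw [← mul_sum] at hderiv
  have hsum : ∑ k, r k ≤ 0 := by
    have := (mul_nonneg_iff_of_pos_left hN).1 hderiv
    linarith
  have hrk : r k = 0 :=
    (sum_eq_zero_iff_of_nonneg fun k _ => hr k).1 (hsum.antisymm (sum_nonneg fun k _ => hr k))
      k (mem_univ k)
  have hden : ((a0 k : ℝ) + a1 k - 1) ^ 3 ≠ 0 := by have := hc k; positivity
  exact_mod_cast (div_eq_zero_iff.1 hrk).resolve_right hden

end loocvPE

theorem stmt13_general (K : ℕ) (a0 a1 : Fin K → ℕ)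
    (hn : 0 < ∑ k : Fin K, (a0 k + a1 k))
    (h : ∀ k, (1 < a0 k ∧ 1 < a1 k) ∨
      (min (a0 k) (a1 k) = 0 ∧ max (a0 k) (a1 k) = a0 k + a1 k ∧ 1 < a0 k + a1 k)) :
    (∀ l : ℝ, 0 ≤ l → loocvPE K a0 a1 0 ≤ loocvPE K a0 a1 l) ↔
      (∀ k, min (a0 k) (a1 k) = 0 ∧ 1 < a0 k + a1 k) := by
  have hk : ∀ k, 2 ≤ a0 k + a1 k := fun k => by rcases h k with h | h <;> omega
  constructor
  · intro hmin k
    have hmul := mul_eq_zero_of_isMinOn_loocvPE hk hn (isMinOn_iff.2 hmin) k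
    exact ⟨Nat.min_eq_zero_iff.2 (Nat.mul_eq_zero.1 hmul), hk k⟩
  · intro hsep l _
    rw [loocvPE_zero_eq_zero hsep]
    exact loocvPE_nonneg l

/-- Assume each category either has both counts `> 1` or is separated
(`min = 0`, `max = a_{k•} > 1`). Then the LOOCV squared prediction error is minimized
at `λ = 0` if and only if there is complete separation in the data. -/
theorem stmt13 (K : ℕ) (hK : 1 ≤ K) (a0 a1 : Fin K → ℕ)
    (hn : 0 < ∑ k : Fin K, (a0 k + a1 k))
    (h : ∀ k, (1 < a0 k ∧ 1 < a1 k) ∨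
      (min (a0 k) (a1 k) = 0 ∧ max (a0 k) (a1 k) = a0 k + a1 k ∧ 1 < a0 k + a1 k)) :
    (∀ l : ℝ, 0 ≤ l → loocvPE K a0 a1 0 ≤ loocvPE K a0 a1 l) ↔
      (∀ k, min (a0 k) (a1 k) = 0 ∧ 1 < a0 k + a1 k) :=
  stmt13_general K a0 a1 hn h
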